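/- Sharpness of the Gaussian smoothing certificate in one dimension: for d = 1, the classifier f(z) = sign of (z ≤ t threshold), i.e., f(z) = 1 if z ≤ t and 0 otherwise, achieves equality in the Cohen bound: if p = P_{η ~ N(0,σ²)}[x + η ≤ t] = Φ((t−x)/σ) > 1/2, then for δ = σ·Φ⁻¹(p) exactly, P[x + δ + η ≤ t] = 1/2, so the certified radius σ·Φ⁻¹(p) cannot be improved for general classifiers. -/

import Mathlib

/-!
Writing `η = σ ξ` with `ξ` standard normal gives `P[a + η ≤ t] = Φ((t - a) / σ)`. Since `Φ` is
strictly increasing, `Φ⁻¹(p) = (t - x) / σ`, so the shift `δ = σ Φ⁻¹(p)` moves the threshold onto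
the median of `η`, where the symmetry of the Gaussian gives probability `1 / 2`.
-/

open MeasureTheory ProbabilityTheory

noncomputable def stdGaussian (d : ℕ) (σ : ℝ) : Measure (EuclideanSpace ℝ (Fin d)) :=
  Measure.map (MeasurableEquiv.toLp 2 (Fin d → ℝ))
    (Measure.pi (fun _ : Fin d => gaussianReal 0 (Real.toNNReal (σ ^ 2))))

noncomputable def Phi : ℝ → ℝ := fun x => ProbabilityTheory.cdf (gaussianReal 0 1) x

noncomputable def PhiInv : ℝ → ℝ := Function.invFun Phi

open Set

lemma cdf_strictMono_of_absolutelyContinuous (μ : Measure ℝ) [IsProbabilityMeasure μ]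
    (hμ : volume ≪ μ) : StrictMono (cdf μ) := by
  intro a b hab
  have hpos : 0 < μ.real (Ioc a b) := by
    refine ENNReal.toReal_pos (fun h => ?_) (measure_ne_top _ _)
    exact hab.not_ge (by simpa using hμ h)
  have hsplit : μ.real (Iic b) = μ.real (Iic a) + μ.real (Ioc a b) := by
    rw [← Iic_union_Ioc_eq_Iic hab.le,
      measureReal_union (Iic_disjoint_Ioc le_rfl) measurableSet_Ioc]
  rw [cdf_eq_real, cdf_eq_real]
  linarith

lemma cdf_zero_eq_half_of_map_neg (μ : Measure ℝ) [IsProbabilityMeasure μ]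
    (hneg : μ.map (fun x => -x) = μ) (h0 : μ {0} = 0) : cdf μ 0 = 1 / 2 := by
  have hsymm : μ.real (Iic 0) = μ.real (Ioi 0) := by
    conv_lhs => rw [← hneg]
    rw [map_measureReal_apply measurable_neg measurableSet_Iic,
      measureReal_congr (Ioi_ae_eq_Ici' h0), neg_preimage, neg_Iic, neg_zero]
  have hcompl : μ.real (Ioi 0) = 1 - μ.real (Iic 0) := by
    rw [← compl_Iic, measureReal_compl measurableSet_Iic, probReal_univ]
  rw [cdf_eq_real]
  linarith

lemma Phi_strictMono : StrictMono Phi :=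
  cdf_strictMono_of_absolutelyContinuous _ (gaussianReal_absolutelyContinuous' 0 one_ne_zero)

lemma Phi_zero : Phi 0 = 1 / 2 :=
  cdf_zero_eq_half_of_map_neg _ (by simpa using gaussianReal_map_neg (μ := 0) (v := 1))
    (gaussianReal_absolutelyContinuous 0 one_ne_zero (by simp))

lemma PhiInv_Phi (x : ℝ) : PhiInv (Phi x) = x :=
  Function.leftInverse_invFun Phi_strictMono.injective x

lemma gaussianReal_zero_one_map_const_mul (σ : ℝ) :
    (gaussianReal 0 1).map (σ * ·) = gaussianReal 0 (σ ^ 2).toNNReal := by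
  rw [gaussianReal_map_const_mul]
  congr
  · simp
  · ext; simp [sq_nonneg]

lemma measureReal_gaussianReal_add_le (σ a t : ℝ) (hσ : 0 < σ) :
    (gaussianReal 0 (σ ^ 2).toNNReal).real {η | a + η ≤ t} = Phi ((t - a) / σ) := by
  have hpre : (σ * ·) ⁻¹' {η | a + η ≤ t} = Iic ((t - a) / σ) := by
    ext ξ
    simp [le_div_iff₀ hσ, mul_comm, le_sub_iff_add_le']
  rw [← gaussianReal_zero_one_map_const_mul,
    map_measureReal_apply (by fun_prop) (measurableSet_le (by fun_prop) (by fun_prop)), hpre,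
    Phi, cdf_eq_real]

theorem stmt16_general (σ x t : ℝ) (hσ : 0 < σ) (p : ℝ)
    (hp : p = ((gaussianReal 0 (Real.toNNReal (σ ^ 2))) {η | x + η ≤ t}).toReal) :
    p = Phi ((t - x) / σ) ∧
    ((gaussianReal 0 (Real.toNNReal (σ ^ 2)))
        {η | x + σ * PhiInv p + η ≤ t}).toReal = 1 / 2 := by
  have hp_eq : p = Phi ((t - x) / σ) := hp.trans (measureReal_gaussianReal_add_le σ x t hσ)
  have hshift : (t - (x + σ * PhiInv p)) / σ = 0 := by
    rw [hp_eq, PhiInv_Phi]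
    field_simp
    ring
  refine ⟨hp_eq, ?_⟩
  rw [← measureReal_def, measureReal_gaussianReal_add_le σ _ t hσ, hshift, Phi_zero]

/-- Sharpness of the Gaussian smoothing certificate in one dimension: for the threshold
classifier `f z = (z ≤ t)`, if `p = P[x + η ≤ t] > 1/2` with `η ~ N(0, σ²)`, then
`p = Φ((t − x)/σ)` and at the perturbation `δ = σ·Φ⁻¹(p)` exactly,
`P[x + δ + η ≤ t] = 1/2`. -/
theorem stmt16 (σ x t : ℝ) (hσ : 0 < σ) (p : ℝ)
    (hp : p = ((gaussianReal 0 (Real.toNNReal (σ ^ 2))) {η | x + η ≤ t}).toReal)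
    (hp2 : 1 / 2 < p) :
    p = Phi ((t - x) / σ) ∧
    ((gaussianReal 0 (Real.toNNReal (σ ^ 2)))
        {η | x + σ * PhiInv p + η ≤ t}).toReal = 1 / 2 :=
  stmt16_general σ x t hσ p hp
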